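/- arXiv:1802.03066 — 2 statements merged into one kernel-verified Lean document; each statement's English description precedes it below -/
import Mathlib

section
/- For any c > 0, the infimum of ∫_{B(0,1)} |Df(x)|^d dx over all C¹ maps f : B(0,1) → ℝ^d with ∫_{B(0,1)} det Df = c equals d^{d/2} c (it is at least d^{d/2} c, and approached by conformal Möbius maps concentrating at the boundary). -/
open MeasureTheory Metric Filter Topology
open scoped ENNReal

noncomputable section

/-- `ℝ^d` as Euclidean space. -/
abbrev E (d : ℕ) := EuclideanSpace ℝ (Fin d)

/-- The first standard basis vector `e₁`. -/
def e1 (d : ℕ) [NeZero d] : E d := EuclideanSpace.single 0 1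

/-- `aₙ = (1 + 1/n) e₁`. -/
def a (d : ℕ) [NeZero d] (n : ℕ) : E d := (1 + 1/(n:ℝ)) • e1 d

/-- `fₙ(x) = (2/n) (x - aₙ)/|x - aₙ|²`. -/
def f (d : ℕ) [NeZero d] (n : ℕ) (x : E d) : E d :=
  (2/(n:ℝ)) • (‖x - a d n‖^2)⁻¹ • (x - a d n)

/-- The Frobenius (Hilbert–Schmidt) norm of a linear map on `ℝ^d`. -/
def frob (d : ℕ) (A : E d →L[ℝ] E d) : ℝ :=
  Real.sqrt (∑ i, ‖A (EuclideanSpace.single i 1)‖^2)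

/-!
Pointwise, AM-GM applied to the eigenvalues of `AᵀA` gives `det A ^ 2 ≤ (|A|² / d) ^ d`, that is
`d^{d/2} |det A| ≤ |A|^d`; integrating gives the lower bound. Equality holds for nonnegative
multiples of rotations, so an orientation-preserving Möbius map attains the bound: the inversion
about a point `p` off the closed ball, followed by a reflection and scaled by `t ≥ 0`, has
derivative `(t / |x - p|²) • (rotation)`, and `t` is chosen so that `∫ det Df = c`.
-/

open EuclideanGeometry
open scoped Matrix

theorem Real.prod_le_arith_mean_pow {ι : Type*} [Fintype ι] [Nonempty ι] (z : ι → ℝ)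
    (hz : ∀ i, 0 ≤ z i) : ∏ i, z i ≤ ((∑ i, z i) / Fintype.card ι) ^ Fintype.card ι := by
  have hn : Fintype.card ι ≠ 0 := Fintype.card_ne_zero
  have amgm := Real.geom_mean_le_arith_mean_weighted Finset.univ (fun _ => (Fintype.card ι : ℝ)⁻¹)
    z (fun _ _ => by positivity) (by simp [hn]) (fun i _ => hz i)
  calc ∏ i, z i = (∏ i, z i ^ (Fintype.card ι : ℝ)⁻¹) ^ Fintype.card ι := by
        rw [← Finset.prod_pow]
        exact Finset.prod_congr rfl fun i _ => (Real.rpow_inv_natCast_pow (hz i) hn).symm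
    _ ≤ ((∑ i, z i) / Fintype.card ι) ^ Fintype.card ι := by
        gcongr
        · exact Finset.prod_nonneg fun i _ => Real.rpow_nonneg (hz i) _
        · simpa [← Finset.mul_sum, div_eq_inv_mul] using amgm

theorem Matrix.PosSemidef.det_le_trace_div_card_pow {n : Type*} [Fintype n] [DecidableEq n]
    [Nonempty n] {A : Matrix n n ℝ} (hA : A.PosSemidef) :
    A.det ≤ (A.trace / Fintype.card n) ^ Fintype.card n := by
  rw [hA.isHermitian.det_eq_prod_eigenvalues, hA.isHermitian.trace_eq_sum_eigenvalues]
  simpa using Real.prod_le_arith_mean_pow _ hA.eigenvalues_nonneg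

theorem Matrix.det_sq_le_trace_transpose_mul_self_div_card_pow {n : Type*} [Fintype n]
    [DecidableEq n] [Nonempty n] (M : Matrix n n ℝ) :
    M.det ^ 2 ≤ ((Mᵀ * M).trace / Fintype.card n) ^ Fintype.card n := by
  have hdet : M.det ^ 2 = (Mᵀ * M).det := by rw [Matrix.det_mul, Matrix.det_transpose, sq]
  rw [hdet]
  exact (Matrix.posSemidef_conjTranspose_mul_self M).det_le_trace_div_card_pow

theorem sqrt_pow_mul_abs_det_le_frob_pow {d : ℕ} [NeZero d] (A : E d →L[ℝ] E d) :
    √d ^ d * |LinearMap.det A.toLinearMap| ≤ frob d A ^ d := by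
  classical
  let b := (EuclideanSpace.basisFun (Fin d) ℝ).toBasis
  let M := LinearMap.toMatrix b b A.toLinearMap
  have hdet : LinearMap.det A.toLinearMap = M.det := (LinearMap.det_toMatrix b _).symm
  have hfrob : frob d A ^ 2 = (Mᵀ * M).trace := by
    rw [frob, Real.sq_sqrt (by positivity)]
    refine Finset.sum_congr rfl fun j _ => ?_
    rw [EuclideanSpace.norm_sq_eq]
    simp [M, b, Matrix.mul_apply, LinearMap.toMatrix_apply, sq]
  have hdet_sq := M.det_sq_le_trace_transpose_mul_self_div_card_pow
  rw [Fintype.card_fin, ← hfrob, ← hdet] at hdet_sq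
  have hd : (0 : ℝ) < d := by exact_mod_cast Nat.pos_of_neZero d
  rw [← abs_of_nonneg (by positivity : (0 : ℝ) ≤ √d ^ d), ← abs_mul]
  refine abs_le_of_sq_le_sq ?_ (pow_nonneg (Real.sqrt_nonneg _) d)
  calc (√d ^ d * LinearMap.det A.toLinearMap) ^ 2
      = d ^ d * LinearMap.det A.toLinearMap ^ 2 := by
        rw [mul_pow, ← pow_mul, mul_comm d 2, pow_mul, Real.sq_sqrt hd.le]
    _ ≤ d ^ d * (frob d A ^ 2 / d) ^ d := mul_le_mul_of_nonneg_left hdet_sq (by positivity)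
    _ = (frob d A ^ d) ^ 2 := by
        rw [← mul_pow, mul_div_cancel₀ _ hd.ne', ← pow_mul, ← pow_mul, mul_comm]

theorem sqrt_pow_mul_integral_det_le_integral_frob_pow {d : ℕ} [NeZero d] {g : E d → E d}
    {μ : Measure (E d)}
    (hdet : Integrable (fun x => LinearMap.det (fderiv ℝ g x).toLinearMap) μ)
    (hfrob : Integrable (fun x => frob d (fderiv ℝ g x) ^ d) μ) :
    √d ^ d * ∫ x, LinearMap.det (fderiv ℝ g x).toLinearMap ∂μ ≤
      ∫ x, frob d (fderiv ℝ g x) ^ d ∂μ := by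
  rw [← integral_const_mul]
  exact integral_mono (hdet.const_mul _) hfrob fun x =>
    (mul_le_mul_of_nonneg_left (le_abs_self _) (by positivity)).trans
      (sqrt_pow_mul_abs_det_le_frob_pow _)

theorem frob_smul_of_norm_map {d : ℕ} (s : ℝ) (U : E d →L[ℝ] E d) (hU : ∀ v, ‖U v‖ = ‖v‖) :
    frob d (s • U) = |s| * √d := by
  have hcol : ∀ i : Fin d, ‖(s • U) (EuclideanSpace.single i 1)‖ ^ 2 = s ^ 2 := fun i => by
    simp [norm_smul, hU]
  simp only [frob, hcol, Finset.sum_const, Finset.card_univ, Fintype.card_fin, nsmul_eq_mul]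
  rw [Real.sqrt_mul (Nat.cast_nonneg d), Real.sqrt_sq_eq_abs, mul_comm]

theorem Submodule.det_reflection_orthogonal_singleton {𝕜 F : Type*} [RCLike 𝕜]
    [NormedAddCommGroup F] [InnerProductSpace 𝕜 F] [FiniteDimensional 𝕜 F] {v : F} (hv : v ≠ 0) :
    LinearMap.det ((𝕜 ∙ v)ᗮ.reflection : F →L[𝕜] F).toLinearMap = -1 :=
  (Submodule.det_reflection _).trans <| by
    rw [Submodule.orthogonal_orthogonal, finrank_span_singleton hv, pow_one]

section Competitor

variable (d : ℕ) [NeZero d]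

def inversionCenter : E d := (2 : ℝ) • e1 d

/-- The reflection makes the inversion orientation-preserving. -/
def conformalCompetitor (t : ℝ) (x : E d) : E d :=
  t • (ℝ ∙ e1 d)ᗮ.reflection (inversion (inversionCenter d) 1 x)

variable {d}

theorem one_le_dist_inversionCenter {x : E d} (hx : x ∈ closedBall (0 : E d) 1) :
    1 ≤ dist x (inversionCenter d) := by
  have hnorm : ‖inversionCenter d‖ = 2 := by simp [inversionCenter, e1, norm_smul]
  rw [mem_closedBall_zero_iff] at hx
  rw [dist_eq_norm, norm_sub_rev]
  linarith [norm_sub_norm_le (inversionCenter d) x]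

theorem ne_inversionCenter {x : E d} (hx : x ∈ closedBall (0 : E d) 1) :
    x ≠ inversionCenter d :=
  dist_pos.1 (one_pos.trans_le (one_le_dist_inversionCenter hx))

theorem contDiffOn_conformalCompetitor (t : ℝ) {n : ℕ∞} :
    ContDiffOn ℝ n (conformalCompetitor d t) {inversionCenter d}ᶜ :=
  (((ℝ ∙ e1 d)ᗮ.reflection : E d →L[ℝ] E d).contDiff.comp_contDiffOn
    (contDiffOn_const.inversion contDiffOn_const contDiffOn_id fun _ hx => hx)).const_smul t

theorem hasFDerivAt_conformalCompetitor (t : ℝ) {x : E d} (hx : x ≠ inversionCenter d) :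
    HasFDerivAt (conformalCompetitor d t)
      ((t * (1 / dist x (inversionCenter d)) ^ 2) •
        ((ℝ ∙ e1 d)ᗮ.reflection : E d →L[ℝ] E d).comp
          ((ℝ ∙ (x - inversionCenter d))ᗮ.reflection : E d →L[ℝ] E d)) x := by
  have h := (((ℝ ∙ e1 d)ᗮ.reflection : E d →L[ℝ] E d).hasFDerivAt.comp x
    (hasFDerivAt_inversion (R := 1) hx)).const_smul t
  refine h.congr_fderiv ?_
  rw [ContinuousLinearMap.comp_smul, smul_smul]

theorem det_fderiv_conformalCompetitor (t : ℝ) {x : E d} (hx : x ≠ inversionCenter d) :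
    LinearMap.det (fderiv ℝ (conformalCompetitor d t) x).toLinearMap =
      (t * (1 / dist x (inversionCenter d)) ^ 2) ^ d := by
  have he1 : e1 d ≠ 0 := by simp [e1]
  rw [(hasFDerivAt_conformalCompetitor t hx).fderiv, ContinuousLinearMap.toLinearMap_smul,
    LinearMap.det_smul, ContinuousLinearMap.toLinearMap_comp, LinearMap.det_comp,
    Submodule.det_reflection_orthogonal_singleton he1,
    Submodule.det_reflection_orthogonal_singleton (sub_ne_zero.2 hx), finrank_euclideanSpace_fin]
  ring

theorem frob_fderiv_conformalCompetitor_pow {t : ℝ} (ht : 0 ≤ t) {x : E d}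
    (hx : x ≠ inversionCenter d) :
    frob d (fderiv ℝ (conformalCompetitor d t) x) ^ d =
      √d ^ d * LinearMap.det (fderiv ℝ (conformalCompetitor d t) x).toLinearMap := by
  rw [det_fderiv_conformalCompetitor t hx, (hasFDerivAt_conformalCompetitor t hx).fderiv,
    frob_smul_of_norm_map _ _ fun v => by simp, abs_of_nonneg (by positivity), mul_pow,
    mul_comm]

theorem exists_setIntegral_det_fderiv_conformalCompetitor_eq {c : ℝ} (hc : 0 < c) :
    ∃ t, 0 ≤ t ∧
      IntegrableOn (fun x => LinearMap.det (fderiv ℝ (conformalCompetitor d t) x).toLinearMap)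
        (ball (0 : E d) 1) ∧
      ∫ x in ball (0 : E d) 1,
        LinearMap.det (fderiv ℝ (conformalCompetitor d t) x).toLinearMap = c := by
  set F : E d → ℝ := fun x => ((1 / dist x (inversionCenter d)) ^ 2) ^ d
  have hF_cont : ContinuousOn F (closedBall 0 1) := fun x hx =>
    (((continuousAt_const.div (continuous_id.dist continuous_const).continuousAt
      (dist_ne_zero.2 (ne_inversionCenter hx))).pow 2).pow d).continuousWithinAt
  have hF_int : IntegrableOn F (ball (0 : E d) 1) :=
    (hF_cont.integrableOn_compact (isCompact_closedBall 0 1)).mono_set ball_subset_closedBall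
  have hI_pos : 0 < ∫ x in ball (0 : E d) 1, F x := by
    rw [setIntegral_pos_iff_support_of_nonneg_ae (ae_of_all _ fun x => by positivity) hF_int]
    refine (measure_ball_pos volume (0 : E d) one_pos).trans_le (measure_mono fun x hx => ?_)
    have := one_le_dist_inversionCenter (ball_subset_closedBall hx)
    exact ⟨(by positivity : 0 < F x).ne', hx⟩
  set I := ∫ x in ball (0 : E d) 1, F x
  set t := (c / I) ^ ((d : ℝ)⁻¹)
  have ht_pow : t ^ d = c / I := Real.rpow_inv_natCast_pow (by positivity) (NeZero.ne d)
  have hdet : Set.EqOn (fun x => LinearMap.det (fderiv ℝ (conformalCompetitor d t) x).toLinearMap)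
      (fun x => t ^ d * F x) (ball (0 : E d) 1) := fun x hx =>
    (det_fderiv_conformalCompetitor t (ne_inversionCenter (ball_subset_closedBall hx))).trans
      (mul_pow _ _ _)
  refine ⟨t, by positivity,
    IntegrableOn.congr_fun (hF_int.const_mul (t ^ d)) hdet.symm measurableSet_ball, ?_⟩
  rw [setIntegral_congr_fun measurableSet_ball hdet, integral_const_mul, ht_pow,
    div_mul_cancel₀ _ hI_pos.ne']

end Competitor

theorem stmt_17_general (d : ℕ) [NeZero d] (c : ℝ) (hc : 0 < c) :
    IsGLB
      {y : ℝ | ∃ g : E d → E d,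
        ContDiffOn ℝ 1 g (ball (0 : E d) 1) ∧
        IntegrableOn (fun x => LinearMap.det (fderiv ℝ g x).toLinearMap) (ball (0 : E d) 1) ∧
        IntegrableOn (fun x => (frob d (fderiv ℝ g x)) ^ d) (ball (0 : E d) 1) ∧
        (∫ x in ball (0 : E d) 1, LinearMap.det (fderiv ℝ g x).toLinearMap) = c ∧
        y = ∫ x in ball (0 : E d) 1, (frob d (fderiv ℝ g x)) ^ d}
      ((d : ℝ) ^ ((d : ℝ)/2) * c) := by
  have hsqrt : (d : ℝ) ^ ((d : ℝ) / 2) = √d ^ d := by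
    rw [Real.sqrt_eq_rpow, ← Real.rpow_natCast, ← Real.rpow_mul (Nat.cast_nonneg d)]
    ring_nf
  rw [hsqrt]
  obtain ⟨t, ht, hdet_int, hdet⟩ := exists_setIntegral_det_fderiv_conformalCompetitor_eq (d := d) hc
  have hconf : Set.EqOn (fun x => frob d (fderiv ℝ (conformalCompetitor d t) x) ^ d)
      (fun x => √d ^ d * LinearMap.det (fderiv ℝ (conformalCompetitor d t) x).toLinearMap)
      (ball (0 : E d) 1) := fun x hx =>
    frob_fderiv_conformalCompetitor_pow ht (ne_inversionCenter (ball_subset_closedBall hx))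
  refine ⟨?_, fun b hb => hb ⟨conformalCompetitor d t, ?_, hdet_int,
    IntegrableOn.congr_fun (hdet_int.const_mul _) hconf.symm measurableSet_ball, hdet, ?_⟩⟩
  · rintro y ⟨g, -, hdet_int, hfrob_int, rfl, rfl⟩
    exact sqrt_pow_mul_integral_det_le_integral_frob_pow hdet_int hfrob_int
  · exact (contDiffOn_conformalCompetitor t).mono fun x hx =>
      ne_inversionCenter (ball_subset_closedBall hx)
  · rw [setIntegral_congr_fun measurableSet_ball hconf, integral_const_mul, hdet]

theorem stmt_17 (d : ℕ) [NeZero d] (hd : 2 ≤ d) (c : ℝ) (hc : 0 < c) :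
    IsGLB
      {y : ℝ | ∃ g : E d → E d,
        ContDiffOn ℝ 1 g (ball (0 : E d) 1) ∧
        IntegrableOn (fun x => LinearMap.det (fderiv ℝ g x).toLinearMap) (ball (0 : E d) 1) ∧
        IntegrableOn (fun x => (frob d (fderiv ℝ g x)) ^ d) (ball (0 : E d) 1) ∧
        (∫ x in ball (0 : E d) 1, LinearMap.det (fderiv ℝ g x).toLinearMap) = c ∧
        y = ∫ x in ball (0 : E d) 1, (frob d (fderiv ℝ g x)) ^ d}
      ((d : ℝ) ^ ((d : ℝ)/2) * c) :=
  stmt_17_general d c hc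
end
end

section
/- For any c > 0 and d ≥ 2, the infimum of ∫_{B(0,1)} |Df(x)|^d dx over all C¹ embeddings f : B(0,1) → ℝ^d with vol(f(B(0,1))) = c equals d^{d/2} c. -/
/-!
For a linear map `A` on `ℝ^d`, the Frobenius norm squared is `tr (AᵀA)` and `det (AᵀA) = (det A)²`,
so AM–GM on the eigenvalues of `AᵀA` gives `d^(d/2) |det A| ≤ ‖A‖_F^d`. Integrating over the ball
and changing variables bounds the energy of every injective differentiable map below by
`d^(d/2)` times the volume of its image. Dilations `x ↦ l • x` have constant Frobenius norm
`√d · l` and attain this bound, so the infimum is a minimum.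
-/

open MeasureTheory Metric Filter Topology
open scoped ENNReal

noncomputable section

theorem Real.prod_le_sum_div_card_pow {ι : Type*} [Fintype ι] (z : ι → ℝ) (hz : ∀ i, 0 ≤ z i) :
    ∏ i, z i ≤ ((∑ i, z i) / Fintype.card ι) ^ Fintype.card ι := by
  rcases isEmpty_or_nonempty ι with _ | _
  · simp
  set n := Fintype.card ι
  have hn : n ≠ 0 := Fintype.card_ne_zero
  have amgm : ∏ i, z i ^ (n : ℝ)⁻¹ ≤ ∑ i, (n : ℝ)⁻¹ * z i :=
    Real.geom_mean_le_arith_mean_weighted Finset.univ _ z (fun _ _ => by positivity)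
      (by simp [n, hn]) fun i _ => hz i
  calc ∏ i, z i = (∏ i, z i ^ (n : ℝ)⁻¹) ^ n := by
        rw [← Finset.prod_pow]
        exact Finset.prod_congr rfl fun i _ => (Real.rpow_inv_natCast_pow (hz i) hn).symm
    _ ≤ (∑ i, (n : ℝ)⁻¹ * z i) ^ n := by
        gcongr
        exact Finset.prod_nonneg fun i _ => Real.rpow_nonneg (hz i) _
    _ = ((∑ i, z i) / n) ^ n := by rw [← Finset.mul_sum, inv_mul_eq_div]

theorem Matrix.PosSemidef.det_le_trace_div_card_pow_s19 {n : Type*} [Fintype n] [DecidableEq n]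
    {N : Matrix n n ℝ} (hN : N.PosSemidef) :
    N.det ≤ (N.trace / Fintype.card n) ^ Fintype.card n := by
  have hdet : N.det = ∏ i, hN.isHermitian.eigenvalues i := by
    simpa using hN.isHermitian.det_eq_prod_eigenvalues
  have htr : N.trace = ∑ i, hN.isHermitian.eigenvalues i := by
    simpa using hN.isHermitian.trace_eq_sum_eigenvalues
  rw [hdet, htr]
  exact Real.prod_le_sum_div_card_pow _ hN.eigenvalues_nonneg

theorem frob_nonneg (d : ℕ) (A : E d →L[ℝ] E d) : 0 ≤ frob d A := Real.sqrt_nonneg _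

open scoped Matrix in
theorem det_sq_le_frob_sq_div_pow (d : ℕ) (A : E d →L[ℝ] E d) :
    A.det ^ 2 ≤ (frob d A ^ 2 / d) ^ d := by
  set b := (EuclideanSpace.basisFun (Fin d) ℝ).toBasis
  set M := LinearMap.toMatrix b b A
  have hcol : ∀ i, ‖A (EuclideanSpace.single i 1)‖ ^ 2 = ∑ j, M j i ^ 2 := by
    intro i
    rw [EuclideanSpace.norm_eq, Real.sq_sqrt (by positivity)]
    simp [M, b, LinearMap.toMatrix_apply]
  have htrace : (Mᴴ * M).trace = frob d A ^ 2 := by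
    rw [frob, Real.sq_sqrt (by positivity), Finset.sum_congr rfl fun i _ => hcol i]
    simp [Matrix.trace, Matrix.mul_apply, sq]
  have hdet : (Mᴴ * M).det = A.det ^ 2 := by
    rw [Matrix.det_mul, Matrix.det_conjTranspose, LinearMap.det_toMatrix]
    simp [sq]
  have := (Matrix.posSemidef_conjTranspose_mul_self M).det_le_trace_div_card_pow_s19
  rwa [hdet, htrace, Fintype.card_fin] at this

theorem rpow_mul_abs_det_le_frob_pow (d : ℕ) (A : E d →L[ℝ] E d) :
    (d : ℝ) ^ ((d : ℝ) / 2) * |A.det| ≤ frob d A ^ d := by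
  rw [Real.rpow_div_two_eq_sqrt _ d.cast_nonneg, Real.rpow_natCast]
  refine (pow_le_pow_iff_left₀ (by positivity) (pow_nonneg (frob_nonneg d A) d) two_ne_zero).mp ?_
  calc (√d ^ d * |A.det|) ^ 2 = d ^ d * A.det ^ 2 := by
        rw [mul_pow, sq_abs, ← pow_mul, mul_comm d, pow_mul, Real.sq_sqrt d.cast_nonneg]
    _ ≤ d ^ d * (frob d A ^ 2 / d) ^ d := by gcongr; exact det_sq_le_frob_sq_div_pow d A
    _ = (frob d A ^ d) ^ 2 := by
        rcases eq_or_ne d 0 with rfl | hd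
        · simp
        · rw [← mul_pow, mul_div_cancel₀ _ (by exact_mod_cast hd), ← pow_mul, ← pow_mul, mul_comm]

open scoped Pointwise

theorem rpow_mul_volume_image_le_integral_frob_pow {d : ℕ} {s : Set (E d)} (hs : IsOpen s)
    {g : E d → E d} (hg : DifferentiableOn ℝ g s) (hinj : Set.InjOn g s)
    (hint : IntegrableOn (fun x => frob d (fderiv ℝ g x) ^ d) s) :
    (d : ℝ) ^ ((d : ℝ) / 2) * volume.real (g '' s) ≤ ∫ x in s, frob d (fderiv ℝ g x) ^ d := by
  have hderiv : ∀ x ∈ s, HasFDerivWithinAt g (fderiv ℝ g x) s x := fun x hx =>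
    ((hg.differentiableAt (hs.mem_nhds hx)).hasFDerivAt).hasFDerivWithinAt
  have hvol : volume.real (g '' s) = ∫ x in s, |(fderiv ℝ g x).det| := by
    simpa using integral_image_eq_integral_abs_det_fderiv_smul volume hs.measurableSet hderiv
      hinj (fun _ => (1 : ℝ))
  rw [hvol, ← integral_const_mul]
  exact integral_mono_of_nonneg (.of_forall fun x => by positivity) hint
    (.of_forall fun x => rpow_mul_abs_det_le_frob_pow d _)

theorem frob_fderiv_const_smul (d : ℕ) (l : ℝ) (x : E d) :
    frob d (fderiv ℝ (fun y : E d => l • y) x) = √d * |l| := by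
  have hD : HasFDerivAt (fun y : E d => l • y) (l • ContinuousLinearMap.id ℝ (E d)) x :=
    (hasFDerivAt_id x).const_smul l
  rw [hD.fderiv, frob]
  simp [norm_smul, Real.sqrt_sq_eq_abs, mul_comm]

theorem integral_frob_fderiv_const_smul_pow (d : ℕ) (l : ℝ) (s : Set (E d)) :
    ∫ x in s, frob d (fderiv ℝ (fun y : E d => l • y) x) ^ d =
      (d : ℝ) ^ ((d : ℝ) / 2) * volume.real (l • s) := by
  simp only [frob_fderiv_const_smul, setIntegral_const, measureReal_def, Measure.addHaar_smul,
    ENNReal.toReal_mul, finrank_euclideanSpace_fin,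
    ENNReal.toReal_ofReal (pow_nonneg (abs_nonneg l) d), smul_eq_mul,
    Real.rpow_div_two_eq_sqrt _ d.cast_nonneg, Real.rpow_natCast, mul_pow, abs_pow]
  ring

theorem exists_pos_volume_real_const_smul_eq {d : ℕ} [NeZero d] {s : Set (E d)}
    (hs : 0 < volume.real s) {c : ℝ} (hc : 0 < c) : ∃ l : ℝ, 0 < l ∧ volume.real (l • s) = c := by
  refine ⟨(c / volume.real s) ^ (d⁻¹ : ℝ), by positivity, ?_⟩
  rw [measureReal_def, Measure.addHaar_smul, ENNReal.toReal_mul, ← measureReal_def,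
    finrank_euclideanSpace_fin, Real.rpow_inv_natCast_pow (by positivity) (NeZero.ne d),
    ENNReal.toReal_ofReal (abs_nonneg _), abs_of_pos (by positivity), div_mul_cancel₀ _ hs.ne']

theorem stmt_19_general (d : ℕ) [NeZero d] (c : ℝ) (hc : 0 < c) :
    IsGLB
      {y : ℝ | ∃ g : E d → E d,
        ContDiffOn ℝ 1 g (ball (0 : E d) 1) ∧
        Set.InjOn g (ball (0 : E d) 1) ∧
        IntegrableOn (fun x => (frob d (fderiv ℝ g x)) ^ d) (ball (0 : E d) 1) ∧
        (volume (g '' ball (0 : E d) 1)).toReal = c ∧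
        y = ∫ x in ball (0 : E d) 1, (frob d (fderiv ℝ g x)) ^ d}
      ((d : ℝ) ^ ((d : ℝ)/2) * c) := by
  refine IsLeast.isGLB ⟨?_, ?_⟩
  · have hball : 0 < volume.real (ball (0 : E d) 1) :=
      ENNReal.toReal_pos (measure_ball_pos volume 0 one_pos).ne' measure_ball_lt_top.ne
    obtain ⟨l, hl, hvol⟩ := exists_pos_volume_real_const_smul_eq hball hc
    refine ⟨(l • ·), (contDiff_id.const_smul l).contDiffOn,
      fun x _ y _ h => smul_right_injective _ hl.ne' h, ?_, ?_, ?_⟩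
    · simp only [frob_fderiv_const_smul]
      exact integrableOn_const measure_ball_lt_top.ne
    · rw [Set.image_smul]
      exact hvol
    · rw [integral_frob_fderiv_const_smul_pow, hvol]
  · rintro y ⟨g, hg, hinj, hint, hvol, rfl⟩
    rw [← hvol]
    exact rpow_mul_volume_image_le_integral_frob_pow isOpen_ball
      (hg.differentiableOn one_ne_zero) hinj hint

theorem stmt_19 (d : ℕ) [NeZero d] (hd : 2 ≤ d) (c : ℝ) (hc : 0 < c) :
    IsGLB
      {y : ℝ | ∃ g : E d → E d,
        ContDiffOn ℝ 1 g (ball (0 : E d) 1) ∧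
        Set.InjOn g (ball (0 : E d) 1) ∧
        IntegrableOn (fun x => (frob d (fderiv ℝ g x)) ^ d) (ball (0 : E d) 1) ∧
        (volume (g '' ball (0 : E d) 1)).toReal = c ∧
        y = ∫ x in ball (0 : E d) 1, (frob d (fderiv ℝ g x)) ^ d}
      ((d : ℝ) ^ ((d : ℝ)/2) * c) :=
  stmt_19_general d c hc
end
end
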